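/- arXiv:2406.07718 — 5 statements merged into one kernel-verified Lean document; each statement's English description precedes it below -/
import Mathlib

section
/- Let q_{j,k} ∈ ℤ, a_k ∈ ℝ, t_1, ..., t_s ∈ ℝ, and suppose ∑_{j=1}^s ∑_{k=1}^r q_{j,k} a_k t_j = B' where B' > ∑_{j=1}^s ∑_{k=1}^r |q_{j,k}|. Then the integer S := ∑_{j=1}^s ∑_{k=1}^r q_{j,k} ⌊a_k t_j⌋ satisfies 0 < S < 2B'. -/
/-- Central arithmetic inequality: if ∑_j ∑_k q_{j,k} a_k t_j = B' with
B' > ∑ |q_{j,k}|, then S := ∑_j ∑_k q_{j,k} ⌊a_k t_j⌋ satisfies 0 < S < 2B'. -/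
theorem stmt_4 (s r : ℕ) (q : Fin s → Fin r → ℤ) (a : Fin r → ℝ)
    (t : Fin s → ℝ) (B' : ℝ)
    (hB' : B' > ∑ j, ∑ k, |(q j k : ℝ)|)
    (heq : ∑ j, ∑ k, (q j k : ℝ) * a k * t j = B') :
    0 < ((∑ j, ∑ k, q j k * ⌊a k * t j⌋ : ℤ) : ℝ) ∧
      ((∑ j, ∑ k, q j k * ⌊a k * t j⌋ : ℤ) : ℝ) < 2 * B' := by
  set S : ℝ := ((∑ j, ∑ k, q j k * ⌊a k * t j⌋ : ℤ) : ℝ) with hS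
  have h1 : S - B' = ∑ j, ∑ k, (q j k : ℝ) * ((⌊a k * t j⌋ : ℝ) - a k * t j) := by
    rw [hS, ← heq]
    push_cast
    rw [← Finset.sum_sub_distrib]
    refine Finset.sum_congr rfl fun j _ => ?_
    rw [← Finset.sum_sub_distrib]
    refine Finset.sum_congr rfl fun k _ => ?_
    ring
  have h2 : |S - B'| < B' := by
    rw [h1]
    calc |∑ j, ∑ k, (q j k : ℝ) * ((⌊a k * t j⌋ : ℝ) - a k * t j)|
        ≤ ∑ j, ∑ k, |(q j k : ℝ)| := by
          refine (Finset.abs_sum_le_sum_abs _ _).trans ?_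
          refine Finset.sum_le_sum fun j _ => ?_
          refine (Finset.abs_sum_le_sum_abs _ _).trans ?_
          refine Finset.sum_le_sum fun k _ => ?_
          rw [abs_mul]
          have hle : |(⌊a k * t j⌋ : ℝ) - a k * t j| ≤ 1 := by
            rw [abs_le]
            constructor
            · linarith [Int.sub_one_lt_floor (a k * t j)]
            · linarith [Int.floor_le (a k * t j)]
          calc |(q j k : ℝ)| * |(⌊a k * t j⌋ : ℝ) - a k * t j|
              ≤ |(q j k : ℝ)| * 1 := by
                exact mul_le_mul_of_nonneg_left hle (abs_nonneg _)
            _ = |(q j k : ℝ)| := mul_one _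
      _ < B' := hB'
  rw [abs_sub_lt_iff] at h2
  constructor <;> linarith [h2.1, h2.2]
end

section
/- Let α ∈ ℝ be irrational and let P(x) = αx^2 + bx + c with b, c ∈ ℝ. Then for every ε > 0 there exists m_0 depending only on α and ε (not on b or c) such that for all m ≥ m_0, |∑_{j=1}^m e(P(j))| ≤ εm, where e(x) = exp(2πix). -/
/-!
Weyl differencing. Replacing the sum `S` by the average of its shifts by `r < H` costs `O(H²)`,
and Cauchy–Schwarz then bounds `H‖S‖` by the square root of `m` times the sum over `r, s < H`
of the correlations `‖∑ⱼ e(P(j + r)) conj (e(P(j + s)))‖`. For quadratic `P` each correlation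
is a geometric sum with ratio `e(2α(r - s))`: it equals `m` on the diagonal, and off the
diagonal it is bounded independently of `m`, `b` and `c` because `2α(r - s)` is irrational.
So `H‖S‖ ≤ √(m(Hm + C_H)) + 2H²`; take `H` large, then `m` large.
-/

open Finset ComplexConjugate
open scoped FourierTransform

lemma sum_norm_sum_sq_le {ι κ : Type*} (s : Finset ι) (t : Finset κ) (G : ι → κ → ℂ) :
    ∑ i ∈ s, ‖∑ k ∈ t, G i k‖ ^ 2 ≤ ∑ k ∈ t, ∑ l ∈ t, ‖∑ i ∈ s, G i k * conj (G i l)‖ := by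
  have hexpand : ((∑ i ∈ s, ‖∑ k ∈ t, G i k‖ ^ 2 : ℝ) : ℂ)
      = ∑ k ∈ t, ∑ l ∈ t, ∑ i ∈ s, G i k * conj (G i l) := by
    push_cast
    simp_rw [← Complex.mul_conj', map_sum, sum_mul_sum]
    rw [sum_comm]
    refine sum_congr rfl fun k _ ↦ ?_
    rw [sum_comm]
  calc _ = ‖((∑ i ∈ s, ‖∑ k ∈ t, G i k‖ ^ 2 : ℝ) : ℂ)‖ := by
        rw [Complex.norm_real, Real.norm_of_nonneg (by positivity)]
    _ ≤ _ := by
      rw [hexpand]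
      exact (norm_sum_le _ _).trans (sum_le_sum fun k _ ↦ norm_sum_le _ _)

lemma norm_sum_sum_sq_le {ι κ : Type*} (s : Finset ι) (t : Finset κ) (G : ι → κ → ℂ) :
    ‖∑ i ∈ s, ∑ k ∈ t, G i k‖ ^ 2 ≤ #s * ∑ k ∈ t, ∑ l ∈ t, ‖∑ i ∈ s, G i k * conj (G i l)‖ :=
  calc _ ≤ (∑ i ∈ s, ‖∑ k ∈ t, G i k‖) ^ 2 := by gcongr; exact norm_sum_le _ _
    _ ≤ #s * ∑ i ∈ s, ‖∑ k ∈ t, G i k‖ ^ 2 := sq_sum_le_card_mul_sum_sq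
    _ ≤ _ := by gcongr; exact sum_norm_sum_sq_le s t G

section VanDerCorput

variable {F : ℕ → ℂ}

lemma norm_sum_le_card_of_norm_le_one (hF : ∀ j, ‖F j‖ ≤ 1) (s : Finset ℕ) :
    ‖∑ j ∈ s, F j‖ ≤ #s := by
  simpa using norm_sum_le_of_le s fun j _ ↦ hF j

lemma norm_sum_Ioc_sub_sum_Ioc_shift_le (hF : ∀ j, ‖F j‖ ≤ 1) (m r : ℕ) :
    ‖∑ j ∈ Ioc 0 m, F j - ∑ j ∈ Ioc 0 m, F (j + r)‖ ≤ 2 * r := by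
  have hshift : ∑ j ∈ Ioc 0 m, F (j + r) = ∑ j ∈ Ioc r (m + r), F j := by
    simpa using (sum_map (Ioc 0 m) (addRightEmbedding r) F).symm
  have hsplit : ∑ j ∈ Ioc 0 m, F j - ∑ j ∈ Ioc 0 m, F (j + r)
      = ∑ j ∈ Ioc 0 r, F j - ∑ j ∈ Ioc m (m + r), F j := by
    rw [hshift]
    linear_combination (sum_Ioc_consecutive F (Nat.zero_le m) (Nat.le_add_right m r)) -
      sum_Ioc_consecutive F (Nat.zero_le r) (Nat.le_add_left r m)
  calc _ ≤ ‖∑ j ∈ Ioc 0 r, F j‖ + ‖∑ j ∈ Ioc m (m + r), F j‖ := hsplit ▸ norm_sub_le _ _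
    _ ≤ r + r := by
      gcongr <;> refine (norm_sum_le_card_of_norm_le_one hF _).trans ?_ <;> simp
    _ = 2 * r := by ring

lemma mul_norm_sum_Ioc_le (hF : ∀ j, ‖F j‖ ≤ 1) (H m : ℕ) :
    H * ‖∑ j ∈ Ioc 0 m, F j‖ ≤ ‖∑ j ∈ Ioc 0 m, ∑ r ∈ range H, F (j + r)‖ + 2 * H ^ 2 := by
  have hdiff : H * ∑ j ∈ Ioc 0 m, F j - ∑ j ∈ Ioc 0 m, ∑ r ∈ range H, F (j + r)
      = ∑ r ∈ range H, (∑ j ∈ Ioc 0 m, F j - ∑ j ∈ Ioc 0 m, F (j + r)) := by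
    rw [sum_sub_distrib, sum_const, card_range, nsmul_eq_mul, sum_comm]
  have hbound : ‖H * ∑ j ∈ Ioc 0 m, F j - ∑ j ∈ Ioc 0 m, ∑ r ∈ range H, F (j + r)‖
      ≤ 2 * H ^ 2 := by
    rw [hdiff]
    calc _ ≤ ∑ r ∈ range H, (2 * H : ℝ) := by
          refine norm_sum_le_of_le _ fun r hr ↦ ?_
          refine (norm_sum_Ioc_sub_sum_Ioc_shift_le hF m r).trans ?_
          gcongr
          exact (mem_range.1 hr).le
      _ = 2 * H ^ 2 := by simp; ring
  calc (H : ℝ) * ‖∑ j ∈ Ioc 0 m, F j‖ = ‖(H : ℂ) * ∑ j ∈ Ioc 0 m, F j‖ := by simp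
    _ ≤ _ := (norm_le_norm_add_norm_sub' _ _).trans (by gcongr)

theorem van_der_corput (hF : ∀ j, ‖F j‖ ≤ 1) (H m : ℕ) :
    H * ‖∑ j ∈ Ioc 0 m, F j‖ ≤ √(m * ∑ r ∈ range H, ∑ s ∈ range H,
      ‖∑ j ∈ Ioc 0 m, F (j + r) * conj (F (j + s))‖) + 2 * H ^ 2 := by
  refine (mul_norm_sum_Ioc_le hF H m).trans (add_le_add_left ?_ _)
  rw [← Real.sqrt_sq (norm_nonneg _)]
  gcongr
  simpa using norm_sum_sum_sq_le (Ioc 0 m) (range H) fun j r ↦ F (j + r)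

end VanDerCorput

lemma norm_geom_sum_Ioc_le {z : ℂ} (hz : ‖z‖ ≤ 1) (hz1 : z ≠ 1) (m : ℕ) :
    ‖∑ j ∈ Ioc 0 m, z ^ j‖ ≤ 2 / ‖z - 1‖ := by
  have hIoc : Ioc 0 m = Ico 1 (m + 1) := rfl
  rw [hIoc, geom_sum_Ico hz1 (by omega), norm_div]
  gcongr
  calc _ ≤ ‖z ^ (m + 1)‖ + ‖z ^ 1‖ := norm_sub_le _ _
    _ ≤ 1 + 1 := by gcongr <;> rw [norm_pow] <;> exact pow_le_one₀ (norm_nonneg z) hz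
    _ = 2 := by norm_num

lemma Real.fourierChar_ne_one_of_irrational {x : ℝ} (hx : Irrational x) : 𝐞 x ≠ 1 := by
  rw [Real.fourierChar_apply', Ne, Circle.exp_eq_one]
  rintro ⟨n, hn⟩
  exact hx ⟨n, by push_cast; nlinarith [Real.pi_pos]⟩

noncomputable def quadPhase (α b c : ℝ) (j : ℕ) : ℂ := 𝐞 (α * j ^ 2 + b * j + c)

lemma norm_quadPhase (α b c : ℝ) (j : ℕ) : ‖quadPhase α b c j‖ = 1 := Circle.norm_coe _

lemma quadPhase_mul_conj (α b c : ℝ) (j r s : ℕ) :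
    quadPhase α b c (j + r) * conj (quadPhase α b c (j + s))
      = (𝐞 (2 * α * (r - s)) : ℂ) ^ j * 𝐞 (α * (r ^ 2 - s ^ 2) + b * (r - s)) := by
  simp only [quadPhase, ← Circle.coe_inv_eq_conj, ← Circle.coe_mul, ← Circle.coe_pow,
    ← AddChar.map_neg_eq_inv, ← AddChar.map_add_eq_mul, ← AddChar.map_nsmul_eq_pow]
  congr 2
  push_cast
  ring

lemma norm_sum_quadPhase_mul_conj (α b c : ℝ) (s : Finset ℕ) (r r' : ℕ) :
    ‖∑ j ∈ s, quadPhase α b c (j + r) * conj (quadPhase α b c (j + r'))‖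
      = ‖∑ j ∈ s, (𝐞 (2 * α * (r - r')) : ℂ) ^ j‖ := by
  simp_rw [quadPhase_mul_conj, ← sum_mul, norm_mul, Circle.norm_coe, mul_one]

lemma exists_sum_norm_quadPhase_correlation_le {α : ℝ} (hα : Irrational α) (H : ℕ) :
    ∃ C, ∀ m b c, ∑ r ∈ range H, ∑ s ∈ range H,
      ‖∑ j ∈ Ioc 0 m, quadPhase α b c (j + r) * conj (quadPhase α b c (j + s))‖ ≤ H * m + C := by
  -- on the diagonal the summand is the junk value `2 / 0 = 0`
  refine ⟨∑ r ∈ range H, ∑ s ∈ range H, 2 / ‖(𝐞 (2 * α * (r - s)) : ℂ) - 1‖, fun m b c ↦ ?_⟩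
  have hpair (r s : ℕ) :
      ‖∑ j ∈ Ioc 0 m, quadPhase α b c (j + r) * conj (quadPhase α b c (j + s))‖
        ≤ (if r = s then (m : ℝ) else 0) + 2 / ‖(𝐞 (2 * α * (r - s)) : ℂ) - 1‖ := by
    rw [norm_sum_quadPhase_mul_conj]
    split_ifs with hrs
    · subst hrs
      simp
    · rw [zero_add]
      refine norm_geom_sum_Ioc_le (Circle.norm_coe _).le ?_ m
      rw [Ne, Circle.coe_eq_one]
      apply Real.fourierChar_ne_one_of_irrational
      have h2rs : (2 * ((r : ℤ) - s) : ℤ) ≠ 0 := by omega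
      convert hα.intCast_mul h2rs using 1
      push_cast
      ring
  calc _ ≤ ∑ r ∈ range H, ∑ s ∈ range H,
        ((if r = s then (m : ℝ) else 0) + 2 / ‖(𝐞 (2 * α * (r - s)) : ℂ) - 1‖) := by
        gcongr with r _ s _
        exact hpair r s
    _ = H * m + _ := by simp +contextual [sum_add_distrib]

theorem exists_mul_norm_sum_quadPhase_le {α : ℝ} (hα : Irrational α) (H : ℕ) :
    ∃ C, ∀ m b c, H * ‖∑ j ∈ Ioc 0 m, quadPhase α b c j‖ ≤ √(m * (H * m + C)) + 2 * H ^ 2 := by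
  obtain ⟨C, hC⟩ := exists_sum_norm_quadPhase_correlation_le hα H
  refine ⟨C, fun m b c ↦ (van_der_corput (fun j ↦ (norm_quadPhase α b c j).le) H m).trans ?_⟩
  gcongr
  exact hC m b c

open Complex in
/-- Weyl: for irrational α and P(x) = αx² + bx + c,
|∑_{j=1}^m e(P(j))| ≤ εm for m large, uniformly in b, c. -/
theorem stmt_5 (α : ℝ) (hα : Irrational α) :
    ∀ ε : ℝ, 0 < ε → ∃ m₀ : ℕ, ∀ m : ℕ, m₀ ≤ m → ∀ b c : ℝ,
      ‖∑ j ∈ Finset.Icc 1 m,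
        Complex.exp (2 * Real.pi * Complex.I *
          (α * (j : ℝ) ^ 2 + b * (j : ℝ) + c))‖ ≤ ε * m := by
  intro ε hε
  obtain ⟨H, hH⟩ := exists_nat_gt (8 / ε ^ 2)
  have hH0 : (0 : ℝ) < H := lt_trans (by positivity) hH
  obtain ⟨C, hC⟩ := exists_mul_norm_sum_quadPhase_le hα H
  refine ⟨⌈max (C / H) (4 * H / ε)⌉₊, fun m hm b c ↦ ?_⟩
  obtain ⟨hCm, hHm⟩ := max_le_iff.1 (Nat.ceil_le.1 hm)
  rw [div_le_iff₀ hH0] at hCm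
  rw [div_le_iff₀ hε] at hHm
  have hεH : 8 ≤ H * ε ^ 2 := (div_lt_iff₀ (by positivity)).1 hH |>.le
  -- `m(Hm + C) ≤ 2Hm² ≤ (εHm/2)²`
  have hsqrt : √(m * (H * m + C)) ≤ ε / 2 * H * m := by
    refine Real.sqrt_le_iff.2 ⟨by positivity, ?_⟩
    nlinarith [mul_le_mul_of_nonneg_left hCm m.cast_nonneg,
      mul_le_mul_of_nonneg_left hεH (by positivity : (0 : ℝ) ≤ H * m ^ 2)]
  have hsum : ∑ j ∈ Icc 1 m, exp (2 * Real.pi * I * (α * (j : ℝ) ^ 2 + b * (j : ℝ) + c))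
      = ∑ j ∈ Ioc 0 m, quadPhase α b c j := by
    refine sum_congr rfl fun j _ ↦ ?_
    rw [quadPhase, Real.fourierChar_apply]
    push_cast
    ring_nf
  rw [hsum]
  refine le_of_mul_le_mul_left ?_ hH0
  calc _ ≤ √(m * (H * m + C)) + 2 * H ^ 2 := hC m b c
    _ ≤ ε / 2 * H * m + ε / 2 * H * m :=
      add_le_add hsqrt (by nlinarith [mul_le_mul_of_nonneg_left hHm hH0.le])
    _ = H * (ε * m) := by ring
end

section
/- Let X = {v_1, ..., v_s} ⊂ ℝ^d be a finite non-spherical set. Then there exist real numbers c_1, ..., c_s, not all zero, and a real B ≠ 0, such that every isometric copy {x_1, ..., x_s} of X in any ℝ^n (with x_j the image of v_j) satisfies ∑_{j=1}^s c_j |x_j|^2 = B. -/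
/-- A finite set is spherical if it embeds isometrically into a sphere of some dimension. -/
def Spherical {d : ℕ} (X : Set (EuclideanSpace ℝ (Fin d))) : Prop :=
  ∃ (N : ℕ) (f : EuclideanSpace ℝ (Fin d) → EuclideanSpace ℝ (Fin N))
    (c : EuclideanSpace ℝ (Fin N)) (ρ : ℝ),
    (∀ x ∈ X, ∀ y ∈ X, dist (f x) (f y) = dist x y) ∧ ∀ x ∈ X, dist (f x) c = ρ

/-! If every affine dependence `∑ cⱼ vⱼ = 0`, `∑ cⱼ = 0` also satisfied `∑ cⱼ ‖vⱼ‖² = 0`, then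
by linear duality `‖vⱼ‖² = ⟪a, vⱼ⟫ + b` for some `a`, `b`, and all `vⱼ` would lie on the sphere
about `a / 2`. So a non-spherical set has an affine dependence `c` with `∑ cⱼ ‖vⱼ‖² ≠ 0`.
Since `∑ᵢ ∑ⱼ cᵢ cⱼ ‖xᵢ - xⱼ‖² = -2 ‖∑ cⱼ xⱼ‖²` when `∑ cⱼ = 0`, the same `c` is an affine
dependence of every isometric copy `x`, and then `∑ cⱼ ‖xⱼ‖² = ∑ cⱼ ‖xⱼ - x₀‖²` depends only on
the distances. -/

open Finset RealInnerProductSpace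

theorem spherical_of_norm_sq_eq_inner_add {d : ℕ} {X : Set (EuclideanSpace ℝ (Fin d))}
    (a : EuclideanSpace ℝ (Fin d)) (b : ℝ) (h : ∀ x ∈ X, ‖x‖ ^ 2 = ⟪a, x⟫ + b) :
    Spherical X := by
  refine ⟨d, id, (1 / 2 : ℝ) • a, √(b + ‖(1 / 2 : ℝ) • a‖ ^ 2), fun _ _ _ _ => rfl,
    fun x hx => ?_⟩
  rw [id, ← Real.sqrt_sq dist_nonneg, dist_eq_norm, norm_sub_sq_real, h x hx,
    real_inner_smul_right, real_inner_comm]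
  congr 1
  ring

theorem exists_affine_dependence_of_not_spherical {ι : Type*} [Fintype ι] {d : ℕ}
    {v : ι → EuclideanSpace ℝ (Fin d)} (hX : ¬ Spherical (Set.range v)) :
    ∃ c : ι → ℝ, ∑ j, c j = 0 ∧ ∑ j, c j • v j = 0 ∧ ∑ j, c j * ‖v j‖ ^ 2 ≠ 0 := by
  classical
  by_contra! h
  set L := Fintype.linearCombination ℝ fun j => ((1 : ℝ), v j)
  set φ := Fintype.linearCombination ℝ fun j => ‖v j‖ ^ 2
  -- `φ` vanishes on `ker L`, so `φ = ψ ∘ L` and `‖v j‖ ^ 2 = ψ (1, v j)` is affine in `v j`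
  have hφ : φ ∈ LinearMap.range L.dualMap := by
    rw [LinearMap.range_dualMap_eq_dualAnnihilator_ker, Submodule.mem_dualAnnihilator]
    intro c hc
    rw [LinearMap.mem_ker, Fintype.linearCombination_apply, Prod.ext_iff, Prod.fst_sum,
      Prod.snd_sum] at hc
    simpa [φ, Fintype.linearCombination_apply, mul_comm] using
      h c (by simpa using hc.1) (by simpa using hc.2)
  obtain ⟨ψ, hψ⟩ := hφ
  let a :=
    (InnerProductSpace.toDual ℝ _).symm (ψ.comp (LinearMap.inr ℝ ℝ _)).toContinuousLinearMap
  refine hX (spherical_of_norm_sq_eq_inner_add a (ψ (1, 0)) ?_)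
  rintro _ ⟨j, rfl⟩
  have hj := LinearMap.congr_fun hψ (Pi.single j 1)
  rw [LinearMap.dualMap_apply, Fintype.linearCombination_apply_single,
    Fintype.linearCombination_apply_single, one_smul, one_smul] at hj
  rw [← hj, InnerProductSpace.toDual_symm_apply, ← Prod.fst_add_snd (1, v j), map_add]
  simp only [add_comm, LinearMap.coe_toContinuousLinearMap', LinearMap.coe_comp,
    LinearMap.coe_inr, Function.comp_apply]

theorem sum_sum_mul_dist_sq_of_sum_eq_zero {ι E : Type*} [Fintype ι] [NormedAddCommGroup E]
    [InnerProductSpace ℝ E] {c : ι → ℝ} (hc : ∑ i, c i = 0) (x : ι → E) :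
    ∑ i, ∑ j, c i * c j * dist (x i) (x j) ^ 2 = -2 * ‖∑ i, c i • x i‖ ^ 2 := by
  calc ∑ i, ∑ j, c i * c j * dist (x i) (x j) ^ 2
      = ∑ i, ∑ j, (c i * (c j * ‖x j‖ ^ 2) + c j * (c i * ‖x i‖ ^ 2)
          - 2 * (c i * (c j * ⟪x i, x j⟫))) := by
        refine sum_congr rfl fun i _ => sum_congr rfl fun j _ => ?_
        rw [dist_eq_norm, norm_sub_sq_real]
        ring
    _ = -2 * ∑ i, c i * ∑ j, c j * ⟪x i, x j⟫ := by
        simp only [sum_add_distrib, sum_sub_distrib, ← mul_sum, ← sum_mul, hc]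
        ring
    _ = -2 * ‖∑ i, c i • x i‖ ^ 2 := by
        simp_rw [← real_inner_self_eq_norm_sq, sum_inner, inner_sum, real_inner_smul_left,
          real_inner_smul_right, mul_sum]

theorem sum_mul_norm_sub_sq_eq {ι E : Type*} [Fintype ι] [NormedAddCommGroup E]
    [InnerProductSpace ℝ E] {c : ι → ℝ} {x : ι → E} (hc : ∑ i, c i = 0)
    (hx : ∑ i, c i • x i = 0) (p : E) :
    ∑ i, c i * ‖x i - p‖ ^ 2 = ∑ i, c i * ‖x i‖ ^ 2 := by
  have hxp : ∑ i, c i * ⟪x i, p⟫ = 0 := by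
    simp_rw [← real_inner_smul_left, ← sum_inner, hx, inner_zero_left]
  simp_rw [norm_sub_sq_real, mul_add, mul_sub, sum_add_distrib, sum_sub_distrib, ← sum_mul,
    mul_left_comm _ (2 : ℝ), ← mul_sum, hxp, hc]
  ring

theorem sum_smul_eq_zero_of_dist_eq {ι E F : Type*} [Fintype ι] [NormedAddCommGroup E]
    [InnerProductSpace ℝ E] [NormedAddCommGroup F] [InnerProductSpace ℝ F] {c : ι → ℝ}
    (hc : ∑ i, c i = 0) {x : ι → E} {y : ι → F}
    (hxy : ∀ i j, dist (x i) (x j) = dist (y i) (y j)) (hy : ∑ i, c i • y i = 0) :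
    ∑ i, c i • x i = 0 := by
  have h := sum_sum_mul_dist_sq_of_sum_eq_zero hc x
  simp_rw [hxy, sum_sum_mul_dist_sq_of_sum_eq_zero hc y, hy, norm_zero] at h
  exact norm_eq_zero.mp (pow_eq_zero_iff two_ne_zero |>.mp (by linarith))

theorem stmt_12_general (d s : ℕ) (v : Fin s → EuclideanSpace ℝ (Fin d))
    (hX : ¬ Spherical (Set.range v)) :
    ∃ (c : Fin s → ℝ) (B : ℝ), c ≠ 0 ∧ B ≠ 0 ∧
      ∀ (n : ℕ) (x : Fin s → EuclideanSpace ℝ (Fin n)),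
        (∀ i j, dist (x i) (x j) = dist (v i) (v j)) →
        ∑ j, c j * ‖x j‖ ^ 2 = B := by
  obtain ⟨c, hc, hcv, hB⟩ := exists_affine_dependence_of_not_spherical hX
  obtain ⟨j₀⟩ : Nonempty (Fin s) := by
    contrapose! hB
    simp
  refine ⟨c, _, fun h => hB (by simp [h]), hB, fun n x hx => ?_⟩
  rw [← sum_mul_norm_sub_sq_eq hc (sum_smul_eq_zero_of_dist_eq hc hx hcv) (x j₀),
    ← sum_mul_norm_sub_sq_eq hc hcv (v j₀)]
  simp_rw [← dist_eq_norm, hx]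

/-- EGMRSS Lemma 14: if X = {v_1, ..., v_s} is non-spherical, then there are c_1, ..., c_s,
not all zero, and B ≠ 0 such that every isometric copy x_1, ..., x_s of X in any ℝ^n
satisfies ∑_j c_j |x_j|² = B. -/
theorem stmt_12 (d s : ℕ) (v : Fin s → EuclideanSpace ℝ (Fin d))
    (hinj : Function.Injective v) (hX : ¬ Spherical (Set.range v)) :
    ∃ (c : Fin s → ℝ) (B : ℝ), c ≠ 0 ∧ B ≠ 0 ∧
      ∀ (n : ℕ) (x : Fin s → EuclideanSpace ℝ (Fin n)),
        (∀ i j, dist (x i) (x j) = dist (v i) (v j)) →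
        ∑ j, c j * ‖x j‖ ^ 2 = B :=
  stmt_12_general d s v hX
end

section
/- Define a colouring of ℝ^n as follows: given reals a_1, ..., a_r and a prime p, colour x ∈ ℝ^n red if ⌊a_k |x|^2⌋ ≡ 0 (mod p) for all k = 1, ..., r, and blue otherwise. Suppose integers q_{j,k} and a real B' > ∑_{j,k} |q_{j,k}| satisfy p > 2B'. Then any points x_1, ..., x_s ∈ ℝ^n satisfying ∑_{j=1}^s ∑_{k=1}^r q_{j,k} a_k |x_j|^2 = B' cannot all be red. -/
/-- Colour x red iff ⌊a_k |x|²⌋ ≡ 0 (mod p) for all k. If the integers q_{j,k} and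
B' > ∑ |q_{j,k}| satisfy p > 2B', then points x_1, ..., x_s with
∑_j ∑_k q_{j,k} a_k |x_j|² = B' cannot all be red. -/
theorem stmt_13 (s r n : ℕ) (a : Fin r → ℝ) (p : ℕ) (hp : p.Prime)
    (q : Fin s → Fin r → ℤ) (B' : ℝ)
    (hB' : B' > ∑ j, ∑ k, |(q j k : ℝ)|) (hpB : (p : ℝ) > 2 * B')
    (x : Fin s → EuclideanSpace ℝ (Fin n))
    (heq : ∑ j, ∑ k, (q j k : ℝ) * a k * ‖x j‖ ^ 2 = B') :
    ¬ ∀ j, (∀ k, (p : ℤ) ∣ ⌊a k * ‖x j‖ ^ 2⌋) := by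
  intro hred
  choose m hm using fun j k => hred j k
  set g : Fin s → Fin r → ℝ := fun j k => a k * ‖x j‖ ^ 2 - ⌊a k * ‖x j‖ ^ 2⌋ with hg
  have hg0 : ∀ j k, 0 ≤ g j k := fun j k => by
    simp only [hg, sub_nonneg]; exact Int.floor_le _
  have hg1 : ∀ j k, g j k < 1 := fun j k => by
    simp only [hg]
    have := Int.lt_floor_add_one (a k * ‖x j‖ ^ 2)
    linarith
  set M : ℤ := ∑ j, ∑ k, q j k * m j k with hM
  have h1 : B' - (p : ℝ) * M = ∑ j, ∑ k, (q j k : ℝ) * g j k := by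
    rw [← heq, hM]
    push_cast
    rw [Finset.mul_sum, ← Finset.sum_sub_distrib]
    refine Finset.sum_congr rfl fun j _ => ?_
    rw [Finset.mul_sum, ← Finset.sum_sub_distrib]
    refine Finset.sum_congr rfl fun k _ => ?_
    have hfl : ((⌊a k * ‖x j‖ ^ 2⌋ : ℤ) : ℝ) = (p : ℝ) * (m j k : ℝ) := by
      exact_mod_cast congrArg (fun z : ℤ => (z : ℝ)) (hm j k)
    simp only [hg]
    rw [hfl]; ring
  have hS : |∑ j, ∑ k, (q j k : ℝ) * g j k| ≤ ∑ j, ∑ k, |(q j k : ℝ)| := by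
    refine (Finset.abs_sum_le_sum_abs _ _).trans ?_
    refine Finset.sum_le_sum fun j _ => ?_
    refine (Finset.abs_sum_le_sum_abs _ _).trans ?_
    refine Finset.sum_le_sum fun k _ => ?_
    rw [abs_mul]
    have : |g j k| ≤ 1 := by
      rw [abs_of_nonneg (hg0 j k)]; exact (hg1 j k).le
    calc |(q j k : ℝ)| * |g j k| ≤ |(q j k : ℝ)| * 1 :=
          mul_le_mul_of_nonneg_left this (abs_nonneg _)
      _ = |(q j k : ℝ)| := mul_one _
  have habs := abs_le.mp hS
  have h0 : (0 : ℝ) < (p : ℝ) * M := by linarith [h1]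
  have h2 : (p : ℝ) * M < (p : ℝ) := by linarith [h1]
  have hppos : (0 : ℝ) < (p : ℝ) := by
    exact_mod_cast hp.pos
  have hM0 : (0 : ℤ) < M := by
    have : (0 : ℝ) < (M : ℝ) := by nlinarith [h0, hppos]
    exact_mod_cast this
  have hM1 : M < 1 := by
    have : (M : ℝ) < 1 := by
      have := (mul_lt_iff_lt_one_right hppos).mp (by simpa using h2)
      exact this
    exact_mod_cast this
  omega
end

section
/- Let α be an irrational real number. For every ε > 0 and every positive integer N, there exists m_0 such that for all m ≥ m_0, all nonzero integer vectors h with ||h||_∞ ≤ N, and all β, γ ∈ ℝ: |(1/m) ∑_{j=1}^m e((∑_k h_k a_k)(j^2 + βj + γ)/p)| < ε, provided each nonzero integer combination ∑_k h_k a_k / p is irrational. -/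
/-!
Van der Corput differencing. Averaging the Weyl sum `S = ∑_{j ≤ m} e(θ q(j))` over `H` shifts
and applying Cauchy–Schwarz gives `(‖S‖/m)² ≲ 1/H + (1/(H²m)) ∑_{d ≠ d' < H} |∑_j e(θ q(j+d)) conj
e(θ q(j+d'))|`. For a quadratic `q` each correlation is a geometric sum with ratio
`e(2θ(d - d'))`, which is `≠ 1` for irrational `θ`, so it is bounded independently of `m`, `β`
and `γ`. Taking `H` large and then `m` large gives the uniform bound for one `θ`; only finitely
many `h` satisfy `‖h‖_∞ ≤ N`, so the threshold can also be taken uniform in `h`.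
-/

open Finset Filter Topology Complex ComplexConjugate

namespace QuadraticWeyl

noncomputable def e (t : ℝ) : ℂ := exp (2 * Real.pi * I * t)

lemma e_add (s t : ℝ) : e (s + t) = e s * e t := by
  rw [e, e, e, ← exp_add]; push_cast; ring_nf

lemma norm_e (t : ℝ) : ‖e t‖ = 1 := by
  simp [e, norm_exp]

lemma conj_e (t : ℝ) : conj (e t) = e (-t) := by
  rw [e, e, ← exp_conj]; simp [map_ofNat]

lemma e_mul_natCast (x : ℝ) (n : ℕ) : e (x * n) = e x ^ n := by
  rw [e, e, ← exp_nat_mul]; push_cast; ring_nf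

lemma e_ne_one {x : ℝ} (hx : Irrational x) : e x ≠ 1 := by
  rw [e, Ne, exp_eq_one_iff]
  rintro ⟨n, hn⟩
  have h2πI : 2 * (Real.pi : ℂ) * I ≠ 0 := by simp [Real.pi_ne_zero]
  have hxn : (x : ℂ) = n := mul_left_cancel₀ h2πI (by rw [hn, mul_comm])
  exact hx.ne_int n (mod_cast hxn)

lemma norm_geom_sum_Ioc_le {z : ℂ} (hz : ‖z‖ = 1) (hz1 : z ≠ 1) (m : ℕ) :
    ‖∑ j ∈ Ioc 0 m, z ^ j‖ ≤ 2 / ‖1 - z‖ := by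
  have htel : (∑ j ∈ Ioc 0 m, z ^ j) * (1 - z) = z - z ^ (m + 1) := by
    induction m with
    | zero => simp
    | succ m ih => rw [sum_Ioc_succ_top (Nat.zero_le m), add_mul, ih]; ring
  have hnum : ‖z - z ^ (m + 1)‖ ≤ 2 := by
    refine (norm_sub_le _ _).trans ?_
    rw [norm_pow, hz, one_pow]; norm_num
  rw [le_div_iff₀ (norm_pos_iff.2 (sub_ne_zero.2 hz1.symm)), ← norm_mul, htel]
  exact hnum

lemma norm_sum_e_linear_le {x : ℝ} (hx : Irrational x) (c : ℝ) (m : ℕ) :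
    ‖∑ j ∈ Ioc 0 m, e (x * j + c)‖ ≤ 2 / ‖1 - e x‖ := by
  simp_rw [add_comm _ c, e_add, e_mul_natCast, ← mul_sum, norm_mul, norm_e, one_mul]
  exact norm_geom_sum_Ioc_le (norm_e x) (e_ne_one hx) m

section VanDerCorput

variable {E : Type*} [SeminormedAddCommGroup E]

lemma norm_sum_le_card {f : ℕ → E} (hf : ∀ j, ‖f j‖ ≤ 1) (s : Finset ℕ) :
    ‖∑ j ∈ s, f j‖ ≤ #s :=
  (norm_sum_le_of_le _ fun j _ => hf j).trans (by simp)

lemma norm_sum_Ioc_shift_sub_le {f : ℕ → E} (hf : ∀ j, ‖f j‖ ≤ 1) (m d : ℕ) :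
    ‖∑ j ∈ Ioc 0 m, f (j + d) - ∑ j ∈ Ioc 0 m, f j‖ ≤ 2 * d := by
  have hshift : ∑ j ∈ Ioc 0 m, f (j + d) = ∑ j ∈ Ioc d (m + d), f j := by
    rw [show Ioc d (m + d) = (Ioc 0 m).map (addRightEmbedding d) by simp, sum_map]; rfl
  have hsplit : ∑ j ∈ Ioc 0 m, f (j + d) - ∑ j ∈ Ioc 0 m, f j
      = ∑ j ∈ Ioc m (m + d), f j - ∑ j ∈ Ioc 0 d, f j := by
    rw [hshift, sub_eq_sub_iff_add_eq_add, add_comm (∑ j ∈ Ioc d _, f j),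
      sum_Ioc_consecutive _ (Nat.zero_le d) (Nat.le_add_left d m), add_comm (∑ j ∈ Ioc m _, f j),
      sum_Ioc_consecutive _ (Nat.zero_le m) (Nat.le_add_right m d)]
  rw [hsplit]
  refine (norm_sub_le _ _).trans ?_
  have h₁ := norm_sum_le_card hf (Ioc m (m + d))
  have h₂ := norm_sum_le_card hf (Ioc 0 d)
  simp only [Nat.card_Ioc, Nat.add_sub_cancel_left, Nat.sub_zero] at h₁ h₂
  linarith

lemma natCast_mul_norm_sum_le [NormedSpace ℝ E] {f : ℕ → E} (hf : ∀ j, ‖f j‖ ≤ 1) (m H : ℕ) :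
    H * ‖∑ j ∈ Ioc 0 m, f j‖
      ≤ ‖∑ j ∈ Ioc 0 m, ∑ d ∈ range H, f (j + d)‖ + 2 * H ^ 2 := by
  set S := ∑ j ∈ Ioc 0 m, f j
  set T := ∑ j ∈ Ioc 0 m, ∑ d ∈ range H, f (j + d)
  have hdiff : (H : ℝ) • S - T = ∑ d ∈ range H, (S - ∑ j ∈ Ioc 0 m, f (j + d)) := by
    rw [sum_sub_distrib, sum_const, card_range, Nat.cast_smul_eq_nsmul, sum_comm]
  have hterm : ∀ d ∈ range H, ‖S - ∑ j ∈ Ioc 0 m, f (j + d)‖ ≤ 2 * H := fun d hd => by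
    rw [norm_sub_rev]
    refine (norm_sum_Ioc_shift_sub_le hf m d).trans ?_
    gcongr
    exact (mem_range.1 hd).le
  have hdiff_le : ‖(H : ℝ) • S - T‖ ≤ 2 * H ^ 2 :=
    calc ‖(H : ℝ) • S - T‖ ≤ ∑ d ∈ range H, (2 * H : ℝ) := hdiff ▸ norm_sum_le_of_le _ hterm
      _ = 2 * H ^ 2 := by rw [sum_const, card_range, nsmul_eq_mul]; ring
  calc (H : ℝ) * ‖S‖ = ‖(H : ℝ) • S‖ := by rw [norm_smul, Real.norm_natCast]
    _ ≤ ‖T‖ + ‖(H : ℝ) • S - T‖ := norm_le_insert' _ _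
    _ ≤ ‖T‖ + 2 * H ^ 2 := by gcongr

lemma norm_sum_window_sq_le (f : ℕ → ℂ) (m H : ℕ) :
    ‖∑ j ∈ Ioc 0 m, ∑ d ∈ range H, f (j + d)‖ ^ 2
      ≤ m * ∑ d ∈ range H, ∑ d' ∈ range H,
        (∑ j ∈ Ioc 0 m, f (j + d) * conj (f (j + d'))).re := by
  set g : ℕ → ℂ := fun j => ∑ d ∈ range H, f (j + d)
  have hg : ∀ j, ‖g j‖ ^ 2
      = ∑ d ∈ range H, ∑ d' ∈ range H, (f (j + d) * conj (f (j + d'))).re := fun j => by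
    rw [← normSq_eq_norm_sq, ← ofReal_re (normSq _), ← mul_conj, map_sum, sum_mul_sum, re_sum]
    simp_rw [re_sum]
  calc ‖∑ j ∈ Ioc 0 m, g j‖ ^ 2 ≤ (∑ j ∈ Ioc 0 m, ‖g j‖) ^ 2 := by gcongr; exact norm_sum_le _ _
    _ ≤ m * ∑ j ∈ Ioc 0 m, ‖g j‖ ^ 2 := by
      simpa using sq_sum_le_card_mul_sum_sq (s := Ioc 0 m) (f := fun j => ‖g j‖)
    _ = _ := by
      simp_rw [hg, re_sum]
      rw [sum_comm]
      exact congrArg _ (sum_congr rfl fun d _ => sum_comm)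

end VanDerCorput

noncomputable def quadraticPhase (θ β γ : ℝ) (j : ℕ) : ℂ := e (θ * (j ^ 2 + β * j + γ))

lemma quadraticPhase_mul_conj (θ β γ : ℝ) (j d d' : ℕ) :
    quadraticPhase θ β γ (j + d) * conj (quadraticPhase θ β γ (j + d'))
      = e (2 * θ * (d - d') * j + θ * ((d - d') * (d + d' + β))) := by
  rw [quadraticPhase, quadraticPhase, conj_e, ← e_add]
  push_cast
  ring_nf

lemma re_sum_quadraticPhase_mul_conj_le {θ : ℝ} (hθ : Irrational θ) (β γ : ℝ) (m d d' : ℕ) :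
    (∑ j ∈ Ioc 0 m, quadraticPhase θ β γ (j + d) * conj (quadraticPhase θ β γ (j + d'))).re
      ≤ (if d = d' then (m : ℝ) else 0) + 2 / ‖1 - e (2 * θ * (d - d'))‖ := by
  simp_rw [quadraticPhase_mul_conj]
  refine (re_le_norm _).trans ?_
  rcases eq_or_ne d d' with rfl | hdd
  · refine (norm_sum_le_card (fun _ => (norm_e _).le) _).trans ?_
    simp only [if_pos, Nat.card_Ioc, Nat.sub_zero, le_add_iff_nonneg_right]
    positivity
  · have hirr : Irrational (2 * θ * (d - d')) := by
      have hcast : 2 * θ * (d - d') = ((2 * ((d : ℤ) - d') : ℤ) : ℝ) * θ := by push_cast; ring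
      rw [hcast]
      exact hθ.intCast_mul (by omega)
    rw [if_neg hdd, zero_add]
    exact norm_sum_e_linear_le hirr _ m

/-- The diagonal terms are junk: `2 / ‖1 - e 0‖ = 2 / 0 = 0`. -/
noncomputable def correlationBound (θ : ℝ) (H : ℕ) : ℝ :=
  ∑ d ∈ range H, ∑ d' ∈ range H, 2 / ‖1 - e (2 * θ * (d - d'))‖

lemma norm_weyl_sum_le {θ : ℝ} (hθ : Irrational θ) (β γ : ℝ) {m H : ℕ} (hm : 0 < m)
    (hH : 0 < H) :
    ‖(1 / (m : ℂ)) * ∑ j ∈ Ioc 0 m, quadraticPhase θ β γ j‖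
      ≤ √(1 / H + correlationBound θ H / H ^ 2 / m) + 2 * H / m := by
  set f := quadraticPhase θ β γ
  set C := correlationBound θ H
  set S := ∑ j ∈ Ioc 0 m, f j
  set T := ∑ j ∈ Ioc 0 m, ∑ d ∈ range H, f (j + d)
  have hf : ∀ j, ‖f j‖ ≤ 1 := fun j => (norm_e _).le
  have hcorr : ∑ d ∈ range H, ∑ d' ∈ range H,
      (∑ j ∈ Ioc 0 m, f (j + d) * conj (f (j + d'))).re ≤ H * m + C :=
    calc _ ≤ ∑ d ∈ range H, ∑ d' ∈ range H,
          ((if d = d' then (m : ℝ) else 0) + 2 / ‖1 - e (2 * θ * (d - d'))‖) :=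
          sum_le_sum fun d _ => sum_le_sum fun d' _ =>
            re_sum_quadraticPhase_mul_conj_le hθ β γ m d d'
      _ = H * m + C := by
          simp +contextual [sum_add_distrib, sum_ite_eq, C, correlationBound]
  have hT : ‖T‖ ≤ √(m * (H * m + C)) :=
    Real.le_sqrt_of_sq_le ((norm_sum_window_sq_le f m H).trans (by gcongr))
  have hmR : (0 : ℝ) < m := by exact_mod_cast hm
  have hHR : (0 : ℝ) < H := by exact_mod_cast hH
  calc ‖(1 / (m : ℂ)) * S‖ = H * ‖S‖ / (H * m) := by
        rw [norm_mul, norm_div, norm_one, Complex.norm_natCast]; field_simp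
    _ ≤ (√(m * (H * m + C)) + 2 * H ^ 2) / (H * m) := by
        gcongr; linarith [natCast_mul_norm_sum_le hf m H]
    _ = √(1 / H + C / H ^ 2 / m) + 2 * H / m := by
        rw [add_div]
        congr 1
        · rw [show 1 / (H : ℝ) + C / H ^ 2 / m = m * (H * m + C) / (H * m) ^ 2 by
            field_simp, Real.sqrt_div' _ (sq_nonneg _), Real.sqrt_sq (by positivity)]
        · field_simp

theorem eventually_norm_weyl_sum_lt {θ : ℝ} (hθ : Irrational θ) {ε : ℝ} (hε : 0 < ε) :
    ∀ᶠ m : ℕ in atTop, ∀ β γ : ℝ,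
      ‖(1 / (m : ℂ)) * ∑ j ∈ Ioc 0 m, quadraticPhase θ β γ j‖ < ε := by
  obtain ⟨H, hHε⟩ := exists_nat_gt (1 / ε ^ 2)
  have hH : 0 < H := by exact_mod_cast (by positivity : (0 : ℝ) < 1 / ε ^ 2).trans hHε
  have hlim : Tendsto (fun m : ℕ => √(1 / H + correlationBound θ H / H ^ 2 / m) + 2 * H / m)
      atTop (𝓝 (√(1 / H + 0) + 0)) :=
    ((tendsto_const_div_atTop_nhds_zero_nat _).const_add _).sqrt.add
      (tendsto_const_div_atTop_nhds_zero_nat _)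
  have hlim_lt : √(1 / H + 0) + 0 < ε := by
    rw [add_zero, add_zero, Real.sqrt_lt' hε, one_div_lt (by positivity) (by positivity)]
    exact hHε
  filter_upwards [hlim.eventually_lt_const hlim_lt, eventually_gt_atTop 0] with m hm hm0 β γ
  exact (norm_weyl_sum_le hθ β γ hm0 hH).trans_lt hm

end QuadraticWeyl

open QuadraticWeyl

theorem stmt_14_general (r : ℕ) (a : Fin r → ℝ) (p : ℝ)
    (hirr : ∀ h : Fin r → ℤ, h ≠ 0 → Irrational ((∑ k, (h k : ℝ) * a k) / p)) :
    ∀ ε : ℝ, 0 < ε → ∀ N : ℕ, 0 < N → ∃ m₀ : ℕ, ∀ m : ℕ, m₀ ≤ m →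
      ∀ h : Fin r → ℤ, h ≠ 0 → (∀ k, |h k| ≤ (N : ℤ)) → ∀ β γ : ℝ,
        ‖(1 / (m : ℂ)) * ∑ j ∈ Finset.Icc 1 m,
          Complex.exp (2 * Real.pi * Complex.I *
            ((∑ k, (h k : ℝ) * a k) * ((j : ℝ) ^ 2 + β * (j : ℝ) + γ) / p))‖ < ε := by
  intro ε hε N _
  have hbox : ∀ᶠ m : ℕ in atTop,
      ∀ h ∈ (Icc (fun _ => -(N : ℤ)) (fun _ => (N : ℤ))).erase 0, ∀ β γ : ℝ,
        ‖(1 / (m : ℂ)) * ∑ j ∈ Ioc 0 m, quadraticPhase ((∑ k, (h k : ℝ) * a k) / p) β γ j‖ < ε :=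
    (eventually_all_finset _).2 fun h hh =>
      eventually_norm_weyl_sum_lt (hirr h (ne_of_mem_erase hh)) hε
  obtain ⟨m₀, hm₀⟩ := eventually_atTop.1 hbox
  refine ⟨m₀, fun m hm h hh hN β γ => ?_⟩
  have hmem : h ∈ (Icc (fun _ => -(N : ℤ)) (fun _ => (N : ℤ))).erase 0 :=
    mem_erase.2 ⟨hh, mem_Icc.2 ⟨fun k => (abs_le.1 (hN k)).1, fun k => (abs_le.1 (hN k)).2⟩⟩
  convert hm₀ m hm h hmem β γ using 4 with j
  · exact Icc_add_one_left_eq_Ioc 0 m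
  · rw [quadraticPhase, e]
    push_cast
    ring_nf

/-- Uniform Weyl estimate over the finitely many h with ‖h‖_∞ ≤ N and over β, γ:
provided every nonzero integer combination ∑_k h_k a_k / p is irrational, for every
ε > 0 and N ≥ 1 there is m₀ such that for m ≥ m₀, all nonzero h with ‖h‖_∞ ≤ N and
all β, γ, |(1/m) ∑_{j=1}^m e((∑_k h_k a_k)(j² + βj + γ)/p)| < ε. -/
theorem stmt_14 (r : ℕ) (a : Fin r → ℝ) (p : ℝ) (α : ℝ) (hα : Irrational α)
    (hirr : ∀ h : Fin r → ℤ, h ≠ 0 → Irrational ((∑ k, (h k : ℝ) * a k) / p)) :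
    ∀ ε : ℝ, 0 < ε → ∀ N : ℕ, 0 < N → ∃ m₀ : ℕ, ∀ m : ℕ, m₀ ≤ m →
      ∀ h : Fin r → ℤ, h ≠ 0 → (∀ k, |h k| ≤ (N : ℤ)) → ∀ β γ : ℝ,
        ‖(1 / (m : ℂ)) * ∑ j ∈ Finset.Icc 1 m,
          Complex.exp (2 * Real.pi * Complex.I *
            ((∑ k, (h k : ℝ) * a k) * ((j : ℝ) ^ 2 + β * (j : ℝ) + γ) / p))‖ < ε :=
  stmt_14_general r a p hirr
end
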